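/- arXiv:1710.06023 — 7 statements merged into one kernel-verified Lean document; each statement's English description precedes it below -/
import Mathlib

section
/- Let p be an odd prime and a, b, c integers with p | c, p ∤ ab, and a ≡ -b (mod p). Then for every k ≥ 1 there exist integers x, y, z with p ∤ x such that ax² + by² + cz² ≡ 0 (mod p^k). -/
/-!
Hensel lifting. The polynomial `a X² + b` has the simple root `1` modulo `p`: its value there
is `a + b ≡ 0` and its derivative `2a` is prime to `p` since `p` is odd. Newton's step
`x ↦ x + t pᵏ` lifts a root modulo `pᵏ` to one modulo `pᵏ⁺¹` without changing it modulo `p`,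
so `x² ≡ -b/a` is solvable modulo every `pᵏ` with `p ∤ x`; take `y = 1`, `z = 0`.
-/

open Polynomial

namespace Polynomial

variable {R : Type*} [CommRing R]

theorem isCoprime_derivative_eval_of_dvd_sub (f : R[X]) {p x x₀ : R} (hx : p ∣ x - x₀)
    (hd : IsCoprime p (f.derivative.eval x₀)) : IsCoprime p (f.derivative.eval x) := by
  obtain ⟨q, hq⟩ := hx.trans (sub_dvd_eval_sub x x₀ f.derivative)
  rw [sub_eq_iff_eq_add.mp hq, add_comm]
  exact hd.add_mul_left_right q

theorem exists_pow_succ_dvd_eval_add_mul_pow (f : R[X]) {p x : R} {k : ℕ} (hk : 1 ≤ k)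
    (hf : p ^ k ∣ f.eval x) (hd : IsCoprime p (f.derivative.eval x)) :
    ∃ t, p ^ (k + 1) ∣ f.eval (x + t * p ^ k) := by
  obtain ⟨j, rfl⟩ := Nat.exists_eq_add_of_le' hk
  obtain ⟨m, hm⟩ := hf
  obtain ⟨u, v, huv⟩ := hd
  obtain ⟨K, hK⟩ := f.binomExpansion x (-(m * v) * p ^ (j + 1))
  refine ⟨-(m * v), ?_⟩
  -- with `t = -m v` the linear term cancels: `m + f'(x) t = m (1 - v f'(x)) = m u p`
  have hexpand : f.eval (x + -(m * v) * p ^ (j + 1))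
      = p ^ (j + 2) * (m * u + K * m ^ 2 * v ^ 2 * p ^ j) := by
    rw [hK, hm]
    linear_combination (-(p ^ (j + 1) * m)) * huv
  exact hexpand ▸ dvd_mul_right _ _

theorem exists_pow_dvd_eval_of_dvd_eval (f : R[X]) {p x₀ : R} (h₀ : p ∣ f.eval x₀)
    (hd : IsCoprime p (f.derivative.eval x₀)) (k : ℕ) (hk : 1 ≤ k) :
    ∃ x, p ∣ x - x₀ ∧ p ^ k ∣ f.eval x := by
  induction k, hk using Nat.le_induction with
  | base => exact ⟨x₀, by simp, by simpa using h₀⟩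
  | succ k hk ih =>
    obtain ⟨x, hx, hfx⟩ := ih
    obtain ⟨t, ht⟩ := f.exists_pow_succ_dvd_eval_add_mul_pow hk hfx
      (f.isCoprime_derivative_eval_of_dvd_sub hx hd)
    refine ⟨x + t * p ^ k, ?_, ht⟩
    rw [add_sub_right_comm]
    exact hx.add ((dvd_pow_self p (by omega)).mul_left t)

end Polynomial

theorem primitive_zero_mod_p_pow_general (p : ℕ) (hp : p.Prime) (hodd : Odd p) (a b c : ℤ)
    (hab : ¬ (p : ℤ) ∣ a * b) (hcong : a ≡ -b [ZMOD (p : ℤ)]) :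
    ∀ k : ℕ, 1 ≤ k → ∃ x y z : ℤ, ¬ (p : ℤ) ∣ x ∧
      (p : ℤ) ^ k ∣ (a * x ^ 2 + b * y ^ 2 + c * z ^ 2) := by
  intro k hk
  have hpZ : Prime (p : ℤ) := Nat.prime_iff_prime_int.mp hp
  have hp2 : ¬ (p : ℤ) ∣ 2 := fun h => by
    obtain rfl := (Nat.prime_dvd_prime_iff_eq hp Nat.prime_two).mp (by exact_mod_cast h)
    exact absurd hodd (by decide)
  have hroot : (p : ℤ) ∣ (C a * X ^ 2 + C b).eval 1 := by
    simpa [sub_neg_eq_add] using hcong.symm.dvd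
  have hderiv : IsCoprime (p : ℤ) ((C a * X ^ 2 + C b).derivative.eval 1) := by
    rw [hpZ.irreducible.coprime_iff_not_dvd]
    simpa [mul_comm a 2] using fun h => (hpZ.dvd_or_dvd h).elim hp2 (fun ha => hab (ha.mul_right b))
  obtain ⟨x, hx, hfx⟩ := exists_pow_dvd_eval_of_dvd_eval _ hroot hderiv k hk
  refine ⟨x, 1, 0, fun hpx => hpZ.not_dvd_one ?_, by simpa using hfx⟩
  simpa using dvd_sub hpx hx

/-- If `p` is an odd prime, `p ∣ c`, `p ∤ ab`, and `a ≡ -b (mod p)`, then the form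
`ax² + by² + cz²` has zeros mod every power of `p` with `p ∤ x`. -/
theorem primitive_zero_mod_p_pow (p : ℕ) (hp : p.Prime) (hodd : Odd p) (a b c : ℤ)
    (hc : (p : ℤ) ∣ c) (hab : ¬ (p : ℤ) ∣ a * b) (hcong : a ≡ -b [ZMOD (p : ℤ)]) :
    ∀ k : ℕ, 1 ≤ k → ∃ x y z : ℤ, ¬ (p : ℤ) ∣ x ∧
      (p : ℤ) ^ k ∣ (a * x ^ 2 + b * y ^ 2 + c * z ^ 2) :=
  primitive_zero_mod_p_pow_general p hp hodd a b c hab hcong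
end

section
/- Suppose m ≡ 2 (mod 3) and 4 ∤ m. Then the congruence r² ≡ 5(m-4)² (mod 8(m-2)) has no solution r ∈ ℤ. -/
lemma aux32' : ∀ a b : ZMod 32, b.val % 4 = 2 → a ^ 2 ≠ 5 * (b - 4) ^ 2 := by decide

lemma aux8' : ∀ a b : ZMod 8, b.val % 2 = 1 → a ^ 2 ≠ 5 * (b - 4) ^ 2 := by decide

/-- If `m ≡ 2 (mod 3)` and `4 ∤ m`, then `r² ≡ 5(m-4)² (mod 8(m-2))` has no solution. -/
theorem no_solution_t_eq_one_four_not_dvd (m : ℕ) (hm : 5 ≤ m) (h3 : m % 3 = 2)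
    (h4 : ¬ 4 ∣ m) :
    ¬ ∃ r : ℤ, r ^ 2 ≡ 5 * ((m : ℤ) - 4) ^ 2 [ZMOD 8 * ((m : ℤ) - 2)] := by
  rintro ⟨r, h⟩
  rcases Nat.even_or_odd m with he | ho
  · -- m even, so m % 4 = 2; reduce modulo 32
    have hm4 : m % 4 = 2 := by
      rcases he with ⟨k, hk⟩
      omega
    have hdvd : (32:ℤ) ∣ 8 * ((m:ℤ) - 2) := by
      obtain ⟨k, hk⟩ : ∃ k, m = 4*k + 2 := ⟨m/4, by omega⟩
      exact ⟨k, by push_cast [hk]; ring⟩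
    have h32 : r ^ 2 ≡ 5 * ((m:ℤ)-4)^2 [ZMOD 32] := Int.ModEq.of_dvd hdvd h
    have hc : ((r : ZMod 32))^2 = 5 * (((m:ℕ) : ZMod 32) - 4)^2 := by
      have := (ZMod.intCast_eq_intCast_iff _ _ 32).mpr h32
      push_cast at this
      exact this
    have hv : ((m:ℕ) : ZMod 32).val % 4 = 2 := by
      rw [ZMod.val_natCast]
      omega
    exact aux32' _ _ hv hc
  · -- m odd; reduce modulo 8
    have hdvd : (8:ℤ) ∣ 8 * ((m:ℤ) - 2) := ⟨(m:ℤ) - 2, rfl⟩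
    have h8 : r ^ 2 ≡ 5 * ((m:ℤ)-4)^2 [ZMOD 8] := Int.ModEq.of_dvd hdvd h
    have hc : ((r : ZMod 8))^2 = 5 * (((m:ℕ) : ZMod 8) - 4)^2 := by
      have := (ZMod.intCast_eq_intCast_iff _ _ 8).mpr h8
      push_cast at this
      exact this
    have hmo : m % 2 = 1 := Nat.odd_iff.mp ho
    have hv : ((m:ℕ) : ZMod 8).val % 2 = 1 := by
      rw [ZMod.val_natCast]
      omega
    exact aux8' _ _ hv hc
end

section
/- Suppose m ≡ 2 (mod 3) and 4 | m. Then the congruence r² ≡ 5(m-4)² (mod 8(m-2)) has no solution r ∈ ℤ. -/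
/-- If `m ≡ 2 (mod 3)` and `4 ∣ m`, then `r² ≡ 5(m-4)² (mod 8(m-2))` has no solution. -/
theorem no_solution_t_eq_one_four_dvd (m : ℕ) (hm : 4 ≤ m) (h3 : m % 3 = 2)
    (h4 : 4 ∣ m) :
    ¬ ∃ r : ℤ, r ^ 2 ≡ 5 * ((m : ℤ) - 4) ^ 2 [ZMOD 8 * ((m : ℤ) - 2)] := by
  rintro ⟨r, hr⟩
  have hm3 : (m : ℤ) % 3 = 2 := by omega
  obtain ⟨k, hk⟩ : ∃ k : ℤ, (m : ℤ) = 3 * k + 2 := ⟨(m : ℤ) / 3, by omega⟩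
  have hdvd : (3 : ℤ) ∣ 8 * ((m : ℤ) - 2) := ⟨8 * k, by rw [hk]; ring⟩
  have hr3 : r ^ 2 ≡ 5 * ((m : ℤ) - 4) ^ 2 [ZMOD 3] := hr.of_dvd hdvd
  have h2 : r ^ 2 % 3 = (5 * ((m : ℤ) - 4) ^ 2) % 3 := hr3
  have hrhs : (5 * ((m : ℤ) - 4) ^ 2) % 3 = 2 := by
    have : 5 * ((m : ℤ) - 4) ^ 2 = 3 * (15 * k ^ 2 - 20 * k + 6) + 2 := by rw [hk]; ring
    omega
  have hsq : r ^ 2 % 3 = (r % 3) ^ 2 % 3 := by conv_lhs => rw [show r ^ 2 = r * r by ring, Int.mul_emod]; ring_nf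
  have h0 : r % 3 = 0 ∨ r % 3 = 1 ∨ r % 3 = 2 := by omega
  rcases h0 with h | h | h <;> rw [h] at hsq <;> omega
end

section
/- For m ≡ 2 (mod 3), every integer n is represented 3-adically (i.e., modulo every power of 3) by p_m(x) + p_m(y) + 3·p_m(z) with x, y, z ∈ ℤ. -/
/-- Generalized m-gonal number (the numerator is always even, so `/` is exact). -/
def pm (m x : ℤ) : ℤ := ((m - 2) * x ^ 2 - (m - 4) * x) / 2

/-- Hensel lifting: solve the quadratic congruence for the numerator. -/
lemma key_lift (c : ℤ) : ∀ k : ℕ, 1 ≤ k → ∀ n : ℤ, ∃ x : ℤ,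
    (3 : ℤ) ^ k ∣ (3 * c) * x ^ 2 - (3 * c - 2) * x - 2 * n := by
  intro k
  induction k with
  | zero => intro h; omega
  | succ k ih =>
    intro _ n
    rcases Nat.eq_or_lt_of_le (Nat.one_le_iff_ne_zero.mpr (Nat.succ_ne_zero k)) with h1 | h1
    · -- k + 1 = 1, base case
      refine ⟨n, ?_⟩
      have hk0 : k = 0 := by omega
      subst hk0
      have : (3 * c) * n ^ 2 - (3 * c - 2) * n - 2 * n = 3 * (c * (n ^ 2 - n)) := by ring
      rw [this, pow_one]
      exact Dvd.intro _ rfl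
    · -- k ≥ 1
      have hk : 1 ≤ k := by omega
      obtain ⟨x, hx⟩ := ih hk n
      obtain ⟨t, ht⟩ := hx
      refine ⟨x + 3 ^ k * t, ⟨t * (c * (2 * x - 1) + 1) + 3 ^ k * c * t ^ 2, ?_⟩⟩
      have h2n : 2 * n = (3 * c) * x ^ 2 - (3 * c - 2) * x - 3 ^ k * t := by linarith
      have hpow : (3 : ℤ) ^ (k + 1) = 3 * 3 ^ k := by ring
      rw [h2n, hpow]
      ring

lemma even_num (m x : ℤ) : (2 : ℤ) ∣ (m - 2) * x ^ 2 - (m - 4) * x := by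
  obtain ⟨d, hd⟩ := Int.even_mul_succ_self (x - 1)
  refine ⟨m * d - x ^ 2 + 2 * x, ?_⟩
  have : (x - 1) * (x - 1 + 1) = x ^ 2 - x := by ring
  rw [this] at hd
  linear_combination m * hd

/-- For `m ≡ 2 (mod 3)`, every integer is represented modulo every power of 3
by `p_m(x) + p_m(y) + 3p_m(z)`. -/
theorem three_adic_representation (m : ℕ) (hm : 3 ≤ m) (h3 : m % 3 = 2) :
    ∀ k : ℕ, 1 ≤ k → ∀ n : ℤ, ∃ x y z : ℤ,
      n ≡ pm m x + pm m y + 3 * pm m z [ZMOD (3 : ℤ) ^ k] := by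
  intro k hk n
  -- m = 3c + 2 over ℤ
  have hc : ∃ c : ℤ, (m : ℤ) - 2 = 3 * c := by
    refine ⟨(m / 3 : ℕ), ?_⟩
    have := Nat.div_add_mod m 3
    push_cast
    omega
  obtain ⟨c, hc⟩ := hc
  obtain ⟨x, hx⟩ := key_lift c k hk n
  rw [← hc] at hx
  have hnum : 2 * pm m x = ((m : ℤ) - 2) * x ^ 2 - ((m : ℤ) - 4) * x :=
    Int.mul_ediv_cancel' (even_num _ _)
  have hdvd : (3 : ℤ) ^ k ∣ 2 * (pm m x - n) := by
    have : 2 * (pm m x - n) = ((m : ℤ) - 2) * x ^ 2 - ((m : ℤ) - 4) * x - 2 * n := by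
      rw [mul_sub, hnum]
    rw [this]
    convert hx using 2
    ring
  have hcop : IsCoprime ((3 : ℤ) ^ k) 2 := by
    apply IsCoprime.pow_left
    norm_num
  have hdvd' : (3 : ℤ) ^ k ∣ pm m x - n := hcop.dvd_of_dvd_mul_left hdvd
  refine ⟨x, 0, 0, ?_⟩
  exact Int.modEq_iff_dvd.mpr (by simpa [pm] using hdvd')
end

section
/- For m ≢ 2 (mod 3), there exists a residue class modulo 9 that is not represented by p_m(x) + p_m(y) + 3·p_m(z); that is, there is an integer n such that for all integers x, y, z, n ≢ p_m(x) + p_m(y) + 3p_m(z) (mod 9). -/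
lemma two_mul_pm (m x : ℤ) : 2 * pm m x = (m - 2) * x ^ 2 - (m - 4) * x := by
  unfold pm
  rw [mul_comm]
  apply Int.ediv_mul_cancel
  obtain ⟨k, hk⟩ := Int.even_mul_succ_self (x - 1)
  exact ⟨(m - 2) * k + x, by linear_combination (m - 2) * hk⟩

lemma pm_cast (m x : ℤ) :
    ((pm m x : ℤ) : ZMod 9) =
      5 * (((m : ZMod 9) - 2) * (x : ZMod 9) ^ 2 - ((m : ZMod 9) - 4) * (x : ZMod 9)) := by
  have h : (2 : ZMod 9) * ((pm m x : ℤ) : ZMod 9) =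
      ((m : ZMod 9) - 2) * (x : ZMod 9) ^ 2 - ((m : ZMod 9) - 4) * (x : ZMod 9) := by
    have := congrArg (fun t : ℤ => (t : ZMod 9)) (two_mul_pm m x)
    push_cast at this
    exact this
  have h10 : (10 : ZMod 9) = 1 := by decide
  calc ((pm m x : ℤ) : ZMod 9) = 10 * ((pm m x : ℤ) : ZMod 9) := by rw [h10, one_mul]
    _ = 5 * ((2 : ZMod 9) * ((pm m x : ℤ) : ZMod 9)) := by ring
    _ = _ := by rw [h]

lemma aux : ∀ M : ZMod 9, M ≠ 2 → M ≠ 5 → M ≠ 8 →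
    ∃ N : ZMod 9, ∀ a b c : ZMod 9,
      N ≠ 5 * ((M - 2) * a ^ 2 - (M - 4) * a) + 5 * ((M - 2) * b ^ 2 - (M - 4) * b) +
        3 * (5 * ((M - 2) * c ^ 2 - (M - 4) * c)) := by decide

/-- For `m ≢ 2 (mod 3)` there is a local obstruction modulo 9 for
`p_m(x) + p_m(y) + 3p_m(z)`. -/
theorem local_obstruction_mod_nine (m : ℕ) (hm : 3 ≤ m) (h3 : m % 3 ≠ 2) :
    ∃ n : ℤ, ∀ x y z : ℤ, ¬ n ≡ pm m x + pm m y + 3 * pm m z [ZMOD (9 : ℤ)] := by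
  have hmod : ∀ r : ℕ, ((m : ZMod 9) = (r : ZMod 9)) → r < 9 → r % 3 = 2 → False := by
    intro r hr hr9 hr3
    have : m % 9 = r := by
      have := (ZMod.natCast_eq_natCast_iff m r 9).mp hr
      have h' : m % 9 = r % 9 := this
      omega
    omega
  have h2 : (m : ZMod 9) ≠ 2 := fun h => hmod 2 (by exact_mod_cast h) (by norm_num) rfl
  have h5 : (m : ZMod 9) ≠ 5 := fun h => hmod 5 (by exact_mod_cast h) (by norm_num) rfl
  have h8 : (m : ZMod 9) ≠ 8 := fun h => hmod 8 (by exact_mod_cast h) (by norm_num) rfl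
  obtain ⟨N, hN⟩ := aux (m : ZMod 9) h2 h5 h8
  refine ⟨(N.val : ℤ), fun x y z h => ?_⟩
  have hc : (((N.val : ℤ)) : ZMod 9) =
      ((pm m x + pm m y + 3 * pm m z : ℤ) : ZMod 9) := by
    have h9 : ((9 : ℤ) : ℤ) = ((9 : ℕ) : ℤ) := by norm_num
    exact (ZMod.intCast_eq_intCast_iff _ _ _).mpr h
  push_cast at hc
  rw [pm_cast, pm_cast, pm_cast] at hc
  simp only [Int.cast_natCast, ZMod.natCast_val, ZMod.cast_id] at hc
  exact hN _ _ _ hc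
end

section
/- Let ℓ be a prime congruent to 1 or 19 modulo 30. Then the natural number n = (5ℓ² − 845)/120 is a non-negative integer for ℓ > 13, and this n is not represented by p₁₇(x) + p₁₇(y) + 3·p₁₇(z) for any integers x, y, z. -/
/-!
Completing the square, `(30x - 13)² = 120 p₁₇(x) + 169`, turns a representation
`n = p₁₇(x) + p₁₇(y) + 3p₁₇(z)` into `5ℓ² = X² + Y² + 3Z²` with `X = 30x - 13`, etc.
With `A = (X + Y + 3Z)/5 = 6(x + y + 3z) - 13` this becomes `(ℓ - A)(ℓ + A) = u² + 15v²`,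
where `u = 12(z - x) + 3(y - z)` and `v = 3(y - z)`. Since `ℓ² ≡ 1 (mod 5)` forces `5 ∣ A`,
one finds `ℓ - A ≡ 11, 14 (mod 15)`, so the Jacobi symbol `(ℓ - A | 15)` is `-1`.
Hence some prime `p` with `(p | 15) = -1` divides `ℓ - A` to an odd power; it is neither `2`
nor `ℓ`, so it does not divide `ℓ + A`. By reciprocity `-15` is a non-residue mod `p`, so `p`
divides `u² + 15v²` only to an even power: a contradiction.
-/

/-- The generalized 17-gonal number `p₁₇(x) = (15x² - 13x)/2` (exact division). -/
def p17 (x : ℤ) : ℤ := (15 * x ^ 2 - 13 * x) / 2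

open scoped NumberTheorySymbols

theorem exists_nat_mul_add_eq_of_mod_six_eq_one {ℓ : ℕ} (hℓ : ℓ % 6 = 1) (h13 : 13 ≤ ℓ) :
    ∃ n : ℕ, 120 * (n : ℤ) + 845 = 5 * (ℓ : ℤ) ^ 2 := by
  have hsq : ℓ ^ 2 % 24 = 1 := by
    have : ℓ % 24 = 1 ∨ ℓ % 24 = 7 ∨ ℓ % 24 = 13 ∨ ℓ % 24 = 19 := by omega
    rcases this with h | h | h | h <;> simp [Nat.pow_mod, h]
  have hle : 13 ^ 2 ≤ ℓ ^ 2 := Nat.pow_le_pow_left h13 2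
  refine ⟨(ℓ ^ 2 - 169) / 24, ?_⟩
  exact_mod_cast (by omega : 120 * ((ℓ ^ 2 - 169) / 24) + 845 = 5 * ℓ ^ 2)

theorem jacobiSym_neg_natCast_of_mod_four_eq_three {q k : ℕ} (hq : q % 4 = 3) (hk : Odd k) :
    J(-q | k) = J(k | q) := by
  rw [neg_eq_neg_one_mul, jacobiSym.mul_left, jacobiSym.at_neg_one hk]
  rcases Nat.odd_mod_four_iff.mp (Nat.odd_iff.mp hk) with hk4 | hk4
  · rw [ZMod.χ₄_nat_one_mod_four hk4, one_mul,
      jacobiSym.quadratic_reciprocity_one_mod_four' (Nat.odd_iff.mpr (by omega)) hk4]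
  · rw [ZMod.χ₄_nat_three_mod_four hk4, jacobiSym.quadratic_reciprocity_three_mod_four hq hk4,
      neg_one_mul, neg_neg]

theorem exists_prime_odd_padicValNat_of_jacobiSym_eq_neg_one {b m : ℕ} (hm : J(m | b) = -1) :
    ∃ p, p.Prime ∧ Odd (padicValNat p m) ∧ J(p | b) = -1 := by
  induction m using Nat.recOnPrimePow with
  | zero =>
    rcases Nat.lt_or_ge 1 b with hb | hb
    · rw [Nat.cast_zero, jacobiSym.zero_left hb] at hm; norm_num at hm
    · interval_cases b <;> simp at hm
  | one => simp at hm
  | prime_pow_mul a p n hp hpa hn ih =>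
    have := Fact.mk hp
    have ha0 : a ≠ 0 := by rintro rfl; exact hpa (dvd_zero p)
    have hval (q : ℕ) (hq : q.Prime) :
        padicValNat q (p ^ n * a) = n * padicValNat q p + padicValNat q a := by
      have := Fact.mk hq
      rw [padicValNat.mul (pow_ne_zero n hp.ne_zero) ha0, padicValNat.pow]
    rw [Nat.cast_mul, Nat.cast_pow, jacobiSym.mul_left, jacobiSym.pow_left] at hm
    rcases jacobiSym.trichotomy a b with ha | ha | ha
    · rw [ha, mul_zero] at hm; norm_num at hm
    · rw [ha, mul_one] at hm
      have hpb : J(p | b) = -1 ∧ Odd n := by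
        rcases jacobiSym.trichotomy p b with h | h | h <;> rw [h] at hm
        · rw [zero_pow hn.ne'] at hm; norm_num at hm
        · rw [one_pow] at hm; norm_num at hm
        · exact ⟨h, (neg_one_pow_eq_neg_one_iff_odd (by norm_num)).mp hm⟩
      refine ⟨p, hp, ?_, hpb.1⟩
      rw [hval p hp, padicValNat_self, mul_one, padicValNat.eq_zero_of_not_dvd hpa, add_zero]
      exact hpb.2
    · obtain ⟨q, hq, hodd, hqb⟩ := ih ha
      have := Fact.mk hq
      have hqp : q ≠ p := by
        rintro rfl; rw [padicValNat.eq_zero_of_not_dvd hpa] at hodd; exact Nat.not_odd_zero hodd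
      refine ⟨q, hq, ?_, hqb⟩
      rwa [hval q hq, padicValNat_primes hqp, mul_zero, zero_add]

theorem even_padicValInt_sq_sub_mul_sq {p : ℕ} [Fact p.Prime] {a : ℤ}
    (ha : legendreSym p a = -1) (x y : ℤ) : Even (padicValInt p (x ^ 2 - a * y ^ 2)) := by
  induction hk : padicValInt p (x ^ 2 - a * y ^ 2) using Nat.strong_induction_on
    generalizing x y with
  | _ k ih =>
    by_cases hdvd : (p : ℤ) ∣ x ^ 2 - a * y ^ 2
    · rcases eq_or_ne (x ^ 2 - a * y ^ 2) 0 with h0 | h0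
      · rw [← hk, h0, padicValInt.zero]; exact Even.zero
      obtain ⟨⟨x', rfl⟩, ⟨y', rfl⟩⟩ := legendreSym.prime_dvd_of_eq_neg_one ha hdvd
      have hfac : (p * x') ^ 2 - a * (p * y') ^ 2 =
          ((p ^ 2 : ℕ) : ℤ) * (x' ^ 2 - a * y' ^ 2) := by
        push_cast; ring
      rw [hfac] at hk h0
      rw [padicValInt.mul (left_ne_zero_of_mul h0) (right_ne_zero_of_mul h0), padicValInt.of_nat,
        padicValNat.prime_pow] at hk
      rw [← hk]
      exact even_two.add (ih _ (by omega) x' y' rfl)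
    · rw [← hk, padicValInt.eq_zero_of_not_dvd hdvd]; exact Even.zero

theorem natCast_mul_ne_sq_add_fifteen_mul_sq {ℓ m : ℕ} {Q x y : ℤ} (hℓ : ℓ.Prime)
    (hℓ15 : J(ℓ | 15) = 1) (hm : J(m | 15) = -1) (hsum : m + Q = 2 * ℓ) :
    m * Q ≠ x ^ 2 + 15 * y ^ 2 := by
  intro h
  obtain ⟨p, hp, hodd, hp15⟩ := exists_prime_odd_padicValNat_of_jacobiSym_eq_neg_one hm
  have := Fact.mk hp
  have hp2 : p ≠ 2 := by rintro rfl; norm_num at hp15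
  have hpℓ : p ≠ ℓ := by rintro rfl; rw [hℓ15] at hp15; norm_num at hp15
  have hpm : (p : ℤ) ∣ m := Int.natCast_dvd_natCast.mpr (dvd_of_one_le_padicValNat hodd.pos)
  have hpQ : ¬(p : ℤ) ∣ Q := by
    intro hpQ
    have : p ∣ 2 * ℓ := by exact_mod_cast hsum ▸ dvd_add hpm hpQ
    rcases hp.dvd_mul.mp this with h2 | hℓ'
    · exact hp2 ((Nat.prime_dvd_prime_iff_eq hp Nat.prime_two).mp h2)
    · exact hpℓ ((Nat.prime_dvd_prime_iff_eq hp hℓ).mp hℓ')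
  have hleg : legendreSym p (-15) = -1 := by
    rw [jacobiSym.legendreSym.to_jacobiSym, ← hp15]
    exact jacobiSym_neg_natCast_of_mod_four_eq_three (q := 15) rfl (hp.odd_of_ne_two hp2)
  have heven := even_padicValInt_sq_sub_mul_sq hleg x y
  have hm0 : (m : ℤ) ≠ 0 := by rintro h0; rw [h0] at hm; norm_num at hm
  have hQ0 : Q ≠ 0 := by rintro rfl; exact hpQ (dvd_zero _)
  rw [show x ^ 2 - -15 * y ^ 2 = m * Q by rw [h]; ring, padicValInt.mul hm0 hQ0,
    padicValInt.of_nat, padicValInt.eq_zero_of_not_dvd hpQ, add_zero] at heven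
  exact Nat.not_even_iff_odd.mpr hodd heven

theorem two_mul_p17 (x : ℤ) : 2 * p17 x = 15 * x ^ 2 - 13 * x := by
  obtain ⟨k, hk⟩ := Int.even_mul_succ_self x
  exact Int.mul_ediv_cancel' ⟨7 * x ^ 2 - 7 * x + k, by linear_combination hk⟩

theorem sq_eq_of_p17 {L x y z : ℤ}
    (h : 120 * (p17 x + p17 y + 3 * p17 z) + 845 = 5 * L ^ 2) :
    L ^ 2 = 180 * (x ^ 2 + y ^ 2 + 3 * z ^ 2) - 156 * (x + y + 3 * z) + 169 := by
  have hL : L ^ 2 = 24 * (p17 x + p17 y + 3 * p17 z) + 169 := by omega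
  linear_combination hL + 12 * two_mul_p17 x + 12 * two_mul_p17 y + 36 * two_mul_p17 z

theorem emod_fifteen_of_sq_eq {L s t : ℤ} (h : L ^ 2 = 180 * t - 156 * s + 169)
    (hL : L % 5 = 1 ∨ L % 5 = 4) : (6 * s - 13) % 15 = 5 := by
  have hL2 : L ^ 2 % 5 = 1 := by rcases hL with hL | hL <;> simp [pow_two, Int.mul_emod, hL]
  omega

/-- For a prime `ℓ ≡ 1, 19 (mod 30)` with `ℓ > 13`, the natural number
`n = (5ℓ² - 845)/120` exists and is not represented by `p₁₇(x) + p₁₇(y) + 3p₁₇(z)`. -/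
theorem not_almost_universal_17 (ℓ : ℕ) (hℓ : ℓ.Prime)
    (hmod : ℓ % 30 = 1 ∨ ℓ % 30 = 19) (hgt : 13 < ℓ) :
    ∃ n : ℕ, 120 * (n : ℤ) + 845 = 5 * (ℓ : ℤ) ^ 2 ∧
      ∀ x y z : ℤ, (n : ℤ) ≠ p17 x + p17 y + 3 * p17 z := by
  obtain ⟨n, hn⟩ := exists_nat_mul_add_eq_of_mod_six_eq_one (by omega) hgt.le
  refine ⟨n, hn, fun x y z hrep => ?_⟩
  have hsq := sq_eq_of_p17 (hrep ▸ hn)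
  set A := 6 * (x + y + 3 * z) - 13
  have hℓ15 : (ℓ : ℤ) % 15 = 1 ∨ (ℓ : ℤ) % 15 = 4 := by omega
  have hA15 : A % 15 = 5 := emod_fifteen_of_sq_eq hsq (by omega)
  have hnorm : ((ℓ : ℤ) - A) * (ℓ + A) =
      (12 * (z - x) + 3 * (y - z)) ^ 2 + 15 * (3 * (y - z)) ^ 2 := by
    linear_combination hsq
  obtain ⟨m, hm⟩ := Int.eq_ofNat_of_zero_le (a := ℓ - A) (by
    nlinarith [sq_nonneg (12 * (z - x) + 3 * (y - z)), sq_nonneg (3 * (y - z))])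
  have hm15 : (m : ℤ) % 15 = 11 ∨ (m : ℤ) % 15 = 14 := by omega
  refine natCast_mul_ne_sq_add_fifteen_mul_sq (Q := ℓ + A) hℓ ?_ ?_ (by omega) (hm ▸ hnorm)
  · rw [jacobiSym.mod_left]
    rcases hℓ15 with h | h <;> simp only [Nat.cast_ofNat, h] <;> norm_num
  · rw [jacobiSym.mod_left]
    rcases hm15 with h | h <;> simp only [Nat.cast_ofNat, h] <;> norm_num
end

section
/- Let r be a non-negative integer with r ≢ 2 (mod 5). Then the congruence ℓ² ≡ (30r+13)² (mod 48r+24) has infinitely many prime solutions ℓ with ℓ ≡ 1 or 19 (mod 30); in particular it is solvable. -/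
/-!
Primes `ℓ ≡ 30r+13 (mod 48r+24)` solve the congruence trivially, and `30r+13` is a unit modulo
`48r+24`, since the gcd divides `5(48r+24) - 8(30r+13) = 16` while `30r+13` is odd. When
`5 ∤ 48r+24` (that is, `r ≢ 2 (mod 5)`) we may also impose `ℓ ≡ 1 (mod 5)`, and Dirichlet's
theorem supplies infinitely many such primes. As `6 ∣ 48r+24` and `30r+13 ≡ 1 (mod 6)`, they
all satisfy `ℓ ≡ 1 (mod 30)`.
-/

theorem Nat.infinite_setOfPred_prime_and_modEq_and_modEq {m n a b : ℕ} (hmn : m.Coprime n)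
    (hm : m ≠ 0) (hn : n ≠ 0) (ha : a.Coprime m) (hb : b.Coprime n) :
    {p : ℕ | p.Prime ∧ p ≡ a [MOD m] ∧ p ≡ b [MOD n]}.Infinite := by
  obtain ⟨c, hca, hcb⟩ := Nat.chineseRemainder hmn a b
  have hc : c.Coprime (m * n) :=
    Nat.Coprime.mul_right (hca.gcd_eq.trans ha) (hcb.gcd_eq.trans hb)
  refine (Nat.infinite_setOfPred_prime_and_modEq (mul_ne_zero hm hn) hc).mono ?_
  rintro p ⟨hp, hpc⟩
  obtain ⟨hpcm, hpcn⟩ := (Nat.modEq_and_modEq_iff_modEq_mul hmn).2 hpc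
  exact ⟨hp, hpcm.trans hca, hpcn.trans hcb⟩

theorem coprime_thirty_mul_add_thirteen (r : ℕ) : Nat.Coprime (30 * r + 13) (48 * r + 24) := by
  set g := Nat.gcd (30 * r + 13) (48 * r + 24)
  have hg16 : g ∣ 16 := by
    have h := Nat.dvd_sub ((Nat.gcd_dvd_right (30 * r + 13) (48 * r + 24)).mul_left 5)
      ((Nat.gcd_dvd_left (30 * r + 13) (48 * r + 24)).mul_left 8)
    rwa [show 5 * (48 * r + 24) - 8 * (30 * r + 13) = 16 by omega] at h
  have hodd : Nat.Coprime (30 * r + 13) (2 ^ 4) :=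
    Nat.Coprime.pow_right 4 (Odd.coprime_two_right ⟨15 * r + 6, by ring⟩)
  exact Nat.Coprime.eq_one_of_dvd (hodd.coprime_dvd_right hg16).symm (Nat.gcd_dvd_left _ _)

/-- For `r ≢ 2 (mod 5)`, the congruence `ℓ² ≡ (30r+13)² (mod 48r+24)` has infinitely
many prime solutions `ℓ ≡ 1, 19 (mod 30)`. -/
theorem infinitely_many_prime_solutions (r : ℕ) (hr : r % 5 ≠ 2) :
    {ℓ : ℕ | ℓ.Prime ∧ (ℓ % 30 = 1 ∨ ℓ % 30 = 19) ∧
      (ℓ : ℤ) ^ 2 ≡ (30 * (r : ℤ) + 13) ^ 2 [ZMOD (48 * (r : ℤ) + 24)]}.Infinite := by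
  have h5 : Nat.Coprime 5 (48 * r + 24) :=
    (Nat.Prime.coprime_iff_not_dvd Nat.prime_five).2 (by omega)
  refine (Nat.infinite_setOfPred_prime_and_modEq_and_modEq h5 (by norm_num) (by omega)
    (Nat.coprime_one_left 5) (coprime_thirty_mul_add_thirteen r)).mono ?_
  rintro ℓ ⟨hℓ, hℓ5, hℓm⟩
  refine ⟨hℓ, Or.inl ?_, ?_⟩
  · have hℓ6 : ℓ ≡ 30 * r + 13 [MOD 6] := hℓm.of_dvd ⟨8 * r + 4, by ring⟩
    unfold Nat.ModEq at hℓ5 hℓ6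
    omega
  · have h := (Int.natCast_modEq_iff.2 hℓm).pow 2
    push_cast at h
    exact h
end
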